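/- arXiv:1801.05194 — 2 statements merged into one kernel-verified Lean document; each statement's English description precedes it below -/
import Mathlib

section
/- Let 𝒜 be a real n×n matrix all of whose complex eigenvalues have strictly negative real part, and let 𝒫 be a real n×n matrix. Then the integral X = −∫₀^∞ exp(t𝒜) 𝒫 exp(t𝒜ᵀ) dt converges, and X satisfies the Lyapunov equation 𝒜X + X𝒜ᵀ = 𝒫. -/
/-!
On a generalized eigenvector `v` of the complexification of `A`, with eigenvalue `μ`,
`exp (t A) v = e^{tμ} p(t)` for a vector-valued polynomial `p`. These vectors span `ℂⁿ` and every
`Re μ` is negative, so `‖exp (t A)‖ = O(e^{-εt})` for some `ε > 0`. Hence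
`g t = exp (t A) P exp (t Aᵀ)` decays exponentially: it is integrable on `(0, ∞)` and tends to `0`.
As `g' = A g + g Aᵀ`, the fundamental theorem of calculus on `(0, ∞)` gives
`A (∫ g) + (∫ g) Aᵀ = -g 0 = -P`.
-/

open Matrix MeasureTheory

attribute [local instance] Matrix.frobeniusNormedAddCommGroup Matrix.frobeniusNormedSpace
  Matrix.frobeniusNormedRing

attribute [local instance] Matrix.frobeniusNormedAlgebra

open NormedSpace Filter Asymptotics Topology Set

theorem Set.Finite.exists_pos_forall_lt_neg {ι : Type*} {s : Set ι} (hs : s.Finite) {f : ι → ℝ}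
    (hf : ∀ i ∈ s, f i < 0) : ∃ ε > 0, ∀ i ∈ s, f i < -ε := by
  have hneg : Tendsto (fun ε : ℝ => -ε) (𝓝[>] 0) (𝓝 0) :=
    (continuous_neg.tendsto' 0 0 neg_zero).mono_left nhdsWithin_le_nhds
  obtain ⟨ε, hε, hlt⟩ := (eventually_mem_nhdsWithin.and
    (hs.eventually_all.2 fun i hi => hneg.eventually_const_lt (hf i hi))).exists
  exact ⟨ε, hε, hlt⟩

theorem isBigO_pow_smul_cexp_mul {μ : ℂ} {ε : ℝ} (hμ : μ.re < -ε) (j : ℕ) :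
    (fun t : ℝ => t ^ j • Complex.exp (t * μ)) =O[atTop] fun t => Real.exp (-ε * t) := by
  have hδ : 0 < -(μ.re + ε) := by linarith
  have hpoly := (isLittleO_pow_exp_pos_mul_atTop j hδ).isBigO.mul
    (isBigO_refl (fun t => Real.exp (μ.re * t)) atTop)
  refine (IsBigO.of_norm_eventuallyLE ?_).trans (hpoly.congr_right fun t => ?_)
  · filter_upwards [eventually_ge_atTop 0] with t ht
    rw [norm_smul, Complex.norm_exp, norm_pow, Real.norm_of_nonneg ht]
    simp [mul_comm]
  · rw [← Real.exp_add]
    ring_nf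

theorem integrableOn_Ioi_of_isBigO_exp_neg {E : Type*} [NormedAddCommGroup E] {f : ℝ → E}
    {a b : ℝ} (hb : 0 < b) (hf : ContinuousOn f (Ici a))
    (ho : f =O[atTop] fun x => Real.exp (-b * x)) : IntegrableOn f (Ioi a) :=
  ((hf.locallyIntegrableOn measurableSet_Ici).integrableOn_of_isBigO_atTop ho
    ⟨Ioi b, Ioi_mem_atTop b, exp_neg_integrableOn_Ioi b hb⟩).mono_set Ioi_subset_Ici_self

theorem hasDerivAt_exp_smul_mul_mul_exp_smul {𝔸 : Type*} [NormedRing 𝔸] [NormedAlgebra ℝ 𝔸]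
    [CompleteSpace 𝔸] (A P B : 𝔸) (t : ℝ) :
    HasDerivAt (fun t : ℝ => exp (t • A) * P * exp (t • B))
      (A * (exp (t • A) * P * exp (t • B)) + exp (t • A) * P * exp (t • B) * B) t := by
  refine (((hasDerivAt_exp_smul_const' A t).mul_const P).mul
    (hasDerivAt_exp_smul_const B t)).congr_deriv ?_
  simp only [mul_assoc]

theorem mul_integral_Ioi_add_integral_Ioi_mul_eq_neg {E : Type*} [NormedRing E]
    [NormedAlgebra ℝ E] [CompleteSpace E] {g : ℝ → E} {a : ℝ} {A B : E}
    (hderiv : ∀ t ∈ Ici a, HasDerivAt g (A * g t + g t * B) t) (hg : IntegrableOn g (Ioi a))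
    (hlim : Tendsto g atTop (𝓝 0)) :
    A * (∫ t in Ioi a, g t) + (∫ t in Ioi a, g t) * B = -g a := by
  rw [← integral_const_mul_of_integrable hg, ← integral_mul_const_of_integrable hg,
    ← integral_add (hg.const_mul A) (hg.mul_const B),
    integral_Ioi_of_hasDerivAt_of_tendsto (hderiv a self_mem_Ici).continuousAt.continuousWithinAt
      (fun t ht => hderiv t (Ioi_subset_Ici_self ht)) ((hg.const_mul A).add (hg.mul_const B)) hlim,
    zero_sub]

namespace Matrix

theorem isBigO_of_forall_isBigO_mulVec {α 𝕜 F m n : Type*} [RCLike 𝕜] [SeminormedAddCommGroup F]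
    [Fintype m] [Fintype n] [DecidableEq n] {l : Filter α} {M : α → Matrix m n 𝕜} {g : α → F}
    (hM : ∀ v, (fun x => M x *ᵥ v) =O[l] g) : M =O[l] g := by
  let columnsToMatrix : (n → m → 𝕜) →L[𝕜] Matrix m n 𝕜 :=
    ((ofLinearEquiv 𝕜).trans (transposeLinearEquiv n m 𝕜 𝕜)).toLinearMap.toContinuousLinearMap
  have hcols : (fun x j => M x *ᵥ Pi.single j 1) =O[l] g := isBigO_pi.mpr fun j => hM _
  refine (columnsToMatrix.isBigO_comp _ l).trans hcols |>.congr_left fun x => ?_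
  ext i j
  simp only [columnsToMatrix, mulVec_single_one]
  rfl

variable {m : Type*} [Fintype m] [DecidableEq m]

theorem exp_smul_mulVec_eq_sum_of_pow_mulVec_eq_zero {𝕜 : Type*} [RCLike 𝕜]
    {N : Matrix m m 𝕜} {k : ℕ} {v : m → 𝕜} (hv : N ^ k *ᵥ v = 0) (t : ℝ) :
    exp (t • N) *ᵥ v = ∑ j ∈ Finset.range k, (t ^ j / j.factorial : ℝ) • (N ^ j *ᵥ v) := by
  have hseries : HasSum (fun j => ((j.factorial : ℝ)⁻¹ • (t • N) ^ j) *ᵥ v) (exp (t • N) *ᵥ v) :=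
    (exp_series_hasSum_exp' (𝕂 := ℝ) (t • N)).map
      (mulVec.addMonoidHomLeft v) (continuous_id.matrix_mulVec continuous_const)
  refine hseries.unique (hasSum_sum_of_ne_finset_zero fun j hj => ?_) |>.trans
    (Finset.sum_congr rfl fun j _ => ?_)
  · have hjk : k ≤ j := by simpa using hj
    have hNj : N ^ j *ᵥ v = 0 := by
      rw [← Nat.sub_add_cancel hjk, pow_add, ← mulVec_mulVec, hv, mulVec_zero]
    rw [smul_pow, smul_mulVec, smul_mulVec, hNj, smul_zero, smul_zero]
  · rw [smul_pow, smul_mulVec, smul_mulVec, smul_smul, div_eq_inv_mul]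

theorem exp_eq_cexp_smul_exp_sub (B : Matrix m m ℂ) (μ : ℂ) :
    exp B = Complex.exp μ • exp (B - μ • 1) := by
  have hcomm : Commute (algebraMap ℂ (Matrix m m ℂ) μ) (B - μ • 1) := Algebra.commutes _ _
  calc exp B = exp (algebraMap ℂ (Matrix m m ℂ) μ + (B - μ • 1)) := by
        rw [Algebra.algebraMap_eq_smul_one, add_sub_cancel]
    _ = algebraMap ℂ (Matrix m m ℂ) (exp μ) * exp (B - μ • 1) := by
        rw [Matrix.exp_add_of_commute _ _ hcomm]
        -- not `rw`: these `exp`s use the product and the Frobenius topology (defeq, not syntactic)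
        exact congrArg (· * _) (algebraMap_exp_comm μ).symm
    _ = Complex.exp μ • exp (B - μ • 1) := by rw [← Algebra.smul_def, Complex.exp_eq_exp_ℂ]

theorem isBigO_exp_smul_mulVec_of_pow_mulVec_eq_zero {B : Matrix m m ℂ} {μ : ℂ} {ε : ℝ}
    (hμ : μ.re < -ε) {k : ℕ} {v : m → ℂ} (hv : (B - μ • 1) ^ k *ᵥ v = 0) :
    (fun t : ℝ => exp (t • B) *ᵥ v) =O[atTop] fun t => Real.exp (-ε * t) := by
  have hexp : ∀ t : ℝ, exp (t • B) *ᵥ v = ∑ j ∈ Finset.range k,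
      ((j.factorial : ℝ)⁻¹ • t ^ j • Complex.exp (t * μ)) • ((B - μ • 1) ^ j *ᵥ v) := by
    intro t
    have hshift : t • B - (↑t * μ) • 1 = t • (B - μ • 1) := by
      rw [smul_sub, mul_smul, Complex.coe_smul]
    rw [exp_eq_cexp_smul_exp_sub (t • B) (t * μ), hshift, smul_mulVec,
      exp_smul_mulVec_eq_sum_of_pow_mulVec_eq_zero hv, Finset.smul_sum]
    refine Finset.sum_congr rfl fun j _ => ?_
    rw [smul_assoc, smul_assoc, smul_comm, div_eq_inv_mul, mul_smul]
  refine (IsBigO.fun_sum fun j _ => ?_).congr_left fun t => (hexp t).symm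
  exact (((isBigO_pow_smul_cexp_mul hμ j).const_smul_left ((j.factorial : ℝ)⁻¹)).smul
    (isBigO_const_const ((B - μ • 1) ^ j *ᵥ v) (one_ne_zero (α := ℝ)) atTop)).congr_right
    fun t => mul_one _

theorem isBigO_exp_smul_mulVec {B : Matrix m m ℂ} {ε : ℝ} (hB : ∀ μ ∈ spectrum ℂ B, μ.re < -ε)
    (v : m → ℂ) : (fun t : ℝ => exp (t • B) *ᵥ v) =O[atTop] fun t => Real.exp (-ε * t) := by
  let decaying : Submodule ℂ (m → ℂ) :=
    { carrier := {v | (fun t : ℝ => exp (t • B) *ᵥ v) =O[atTop] fun t => Real.exp (-ε * t)}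
      add_mem' := fun ha hb => by simpa only [Set.mem_ofPred_eq, mulVec_add] using ha.add hb
      zero_mem' := by simpa only [Set.mem_ofPred_eq, mulVec_zero] using isBigO_zero _ _
      smul_mem' := fun c v hv => by
        simp only [Set.mem_ofPred_eq, mulVec_smul]
        exact hv.const_smul_left c }
  suffices ⊤ ≤ decaying from this Submodule.mem_top
  rw [← Module.End.iSup_maxGenEigenspace_eq_top (toLin' B)]
  refine iSup_le fun μ v hv => ?_
  rcases eq_or_ne v 0 with rfl | hv0
  · exact decaying.zero_mem
  have hμ : μ ∈ spectrum ℂ B := by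
    rw [← spectrum_toLin']
    exact (Module.End.HasUnifEigenvalue.lt zero_lt_one
      (Submodule.ne_bot_iff _ |>.mpr ⟨v, hv, hv0⟩)).mem_spectrum
  obtain ⟨k, hk⟩ := (Module.End.mem_maxGenEigenspace _ _ _).mp hv
  refine isBigO_exp_smul_mulVec_of_pow_mulVec_eq_zero (hB μ hμ) (k := k) ?_
  have hmat : (toLin' B - μ • 1) ^ k = toLin' ((B - μ • 1) ^ k) := by
    rw [toLin'_pow, map_sub, map_smul, toLin'_one, Module.End.one_eq_id]
  rwa [hmat, toLin'_apply] at hk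

theorem map_algebraMap_exp (A : Matrix m m ℝ) :
    (exp A).map (algebraMap ℝ ℂ) = exp (A.map (algebraMap ℝ ℂ)) :=
  map_exp (AlgHom.mapMatrix (Algebra.ofId ℝ ℂ))
    (continuous_id.matrix_map Complex.continuous_ofReal) A

theorem exists_isBigO_exp_smul_of_re_lt_zero {A : Matrix m m ℝ}
    (hA : ∀ μ ∈ spectrum ℂ (A.map (algebraMap ℝ ℂ)), μ.re < 0) :
    ∃ ε > 0, (fun t : ℝ => exp (t • A)) =O[atTop] fun t => Real.exp (-ε * t) := by
  obtain ⟨ε, hε, hlt⟩ := (finite_spectrum _).exists_pos_forall_lt_neg hA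
  refine ⟨ε, hε, IsBigO.trans (isBigO_of_le atTop fun t => ?_)
    (isBigO_of_forall_isBigO_mulVec (isBigO_exp_smul_mulVec hlt))⟩
  have hsmul : (t • A).map (algebraMap ℝ ℂ) = t • A.map (algebraMap ℝ ℂ) := by
    ext; simp
  rw [← hsmul, ← map_algebraMap_exp,
    frobenius_norm_map_eq _ (algebraMap ℝ ℂ) fun a => Complex.norm_real a]

theorem isBigO_exp_smul_mul_mul_exp_smul_transpose {A : Matrix m m ℝ} {ε : ℝ}
    (hA : (fun t : ℝ => exp (t • A)) =O[atTop] fun t => Real.exp (-ε * t)) (P : Matrix m m ℝ) :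
    (fun t : ℝ => exp (t • A) * P * exp (t • Aᵀ)) =O[atTop] fun t => Real.exp (-(2 * ε) * t) := by
  have hAT : (fun t : ℝ => exp (t • Aᵀ)) =O[atTop] fun t => Real.exp (-ε * t) :=
    (isBigO_of_le atTop fun t => by
      rw [← transpose_smul, exp_transpose, frobenius_norm_transpose]).trans hA
  refine ((hA.mul (isBigO_const_const P (one_ne_zero (α := ℝ)) atTop)).mul hAT).congr_right
    fun t => ?_
  rw [mul_one, ← Real.exp_add]
  ring_nf

end Matrix

/-- **Integral representation of the solution of the Lyapunov equation.**
Let `A` be a real `n × n` matrix all of whose complex eigenvalues have strictly negative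
real part (Hurwitz), and let `P` be a real `n × n` matrix. Then the integral
`X = −∫₀^∞ exp(tA) P exp(tAᵀ) dt` converges, and `X` satisfies the Lyapunov equation
`AX + XAᵀ = P`. -/
theorem lyapunov_integral_representation {n : ℕ}
    (A P : Matrix (Fin n) (Fin n) ℝ)
    (hstable : ∀ μ ∈ spectrum ℂ (A.map (algebraMap ℝ ℂ)), μ.re < 0) :
    @IntegrableOn _ _ _ UniformSpace.toTopologicalSpace SeminormedAddGroup.toContinuousENorm
      (fun t : ℝ => NormedSpace.exp (t • A) * P * NormedSpace.exp (t • Aᵀ))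
      (Set.Ioi (0 : ℝ)) volume ∧
    (A * (-(∫ t in Set.Ioi (0 : ℝ),
          NormedSpace.exp (t • A) * P * NormedSpace.exp (t • Aᵀ)))
      + (-(∫ t in Set.Ioi (0 : ℝ),
          NormedSpace.exp (t • A) * P * NormedSpace.exp (t • Aᵀ))) * Aᵀ
      = P) := by
  obtain ⟨ε, hε, hexp⟩ := exists_isBigO_exp_smul_of_re_lt_zero hstable
  have hdecay := isBigO_exp_smul_mul_mul_exp_smul_transpose hexp P
  have hint := integrableOn_Ioi_of_isBigO_exp_neg (a := 0) (by positivity)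
    (Continuous.continuousOn (by fun_prop)) hdecay
  have hlim : Tendsto (fun t : ℝ => exp (t • A) * P * exp (t • Aᵀ)) atTop (𝓝 0) :=
    hdecay.trans_tendsto (Real.tendsto_exp_atBot.comp
      (tendsto_id.const_mul_atTop_of_neg (by linarith)))
  refine ⟨hint, ?_⟩
  rw [mul_neg, neg_mul, ← neg_add, neg_eq_iff_eq_neg]
  exact (mul_integral_Ioi_add_integral_Ioi_mul_eq_neg
    (fun t _ => hasDerivAt_exp_smul_mul_mul_exp_smul A P Aᵀ t) hint hlim).trans (by simp)
end

section
/- Say a real n×n matrix X has bandwidth at most b if X_{ij} = 0 whenever |i − j| > b. Let E and Ā have bandwidth at most b₁ and let P have bandwidth at most b₀. Define G₁ = E P Āᵀ + Ā P Eᵀ and, recursively, G_{i+1} = E(EᵀG_iĀ + ĀᵀG_iE)Āᵀ + Ā(EᵀG_iĀ + ĀᵀG_iE)Eᵀ for i ≥ 1. Then for every i ≥ 1 the matrix G_i has bandwidth at most b₀ + (4i − 2)b₁, and hence the a priori pattern matrix Z̲_w = I + G₁ + G₂ + … + G_{w+1} has bandwidth at most b₀ + (4w + 2)b₁. -/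
open Matrix Finset

/-- A real `n × n` matrix `X` has bandwidth at most `b` if `X i j = 0` whenever
`|i − j| > b`. -/
def HasBandwidth {n : ℕ} (X : Matrix (Fin n) (Fin n) ℝ) (b : ℕ) : Prop :=
  ∀ i j : Fin n, (b : ℤ) < |(i : ℤ) - (j : ℤ)| → X i j = 0

lemma HasBandwidth.mono {n : ℕ} {X : Matrix (Fin n) (Fin n) ℝ} {b b' : ℕ}
    (h : HasBandwidth X b) (hb : b ≤ b') : HasBandwidth X b' := by
  intro i j hij
  exact h i j (lt_of_le_of_lt (by exact_mod_cast hb) hij)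

lemma HasBandwidth.mul {n : ℕ} {A B : Matrix (Fin n) (Fin n) ℝ} {a b : ℕ}
    (hA : HasBandwidth A a) (hB : HasBandwidth B b) :
    HasBandwidth (A * B) (a + b) := by
  intro i j hij
  rw [Matrix.mul_apply]
  refine Finset.sum_eq_zero fun k _ => ?_
  by_cases hk : (a : ℤ) < |(i : ℤ) - (k : ℤ)|
  · rw [hA i k hk, zero_mul]
  · have h2 : (b : ℤ) < |(k : ℤ) - (j : ℤ)| := by
      push_neg at hk
      have := abs_sub_abs_le_abs_sub ((i : ℤ) - j) ((i : ℤ) - k)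
      have htri : |(i : ℤ) - j| ≤ |(i : ℤ) - k| + |(k : ℤ) - j| := by
        have := abs_sub_le (i : ℤ) (k : ℤ) (j : ℤ)
        linarith
      push_cast at hij
      linarith
    rw [hB k j h2, mul_zero]

lemma HasBandwidth.transpose {n : ℕ} {A : Matrix (Fin n) (Fin n) ℝ} {a : ℕ}
    (hA : HasBandwidth A a) : HasBandwidth Aᵀ a := by
  intro i j hij
  rw [Matrix.transpose_apply]
  exact hA j i (by rwa [abs_sub_comm])

lemma HasBandwidth.add {n : ℕ} {A B : Matrix (Fin n) (Fin n) ℝ} {a : ℕ}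
    (hA : HasBandwidth A a) (hB : HasBandwidth B a) : HasBandwidth (A + B) a := by
  intro i j hij
  simp [Matrix.add_apply, hA i j hij, hB i j hij]

lemma HasBandwidth.one {n : ℕ} (b : ℕ) :
    HasBandwidth (1 : Matrix (Fin n) (Fin n) ℝ) b := by
  intro i j hij
  have : i ≠ j := by
    rintro rfl
    simp at hij
    omega
  simp [Matrix.one_apply_ne this]

/-- **Bandedness of the a priori pattern.**
Suppose `E` and `Ā` have bandwidth at most `b₁` and `P` has bandwidth at most `b₀`.
Define `G₁ = E P Āᵀ + Ā P Eᵀ` and, recursively,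
`G_{i+1} = E(EᵀG_iĀ + ĀᵀG_iE)Āᵀ + Ā(EᵀG_iĀ + ĀᵀG_iE)Eᵀ` for `i ≥ 1`. Then for every
`i ≥ 1` the matrix `G_i` has bandwidth at most `b₀ + (4i − 2)b₁`, and hence the a priori
pattern matrix `Z̲_w = I + G₁ + … + G_{w+1}` has bandwidth at most `b₀ + (4w + 2)b₁`. -/
theorem apriori_pattern_bandwidth {n : ℕ}
    (E Abar P : Matrix (Fin n) (Fin n) ℝ) (b₀ b₁ : ℕ)
    (hE : HasBandwidth E b₁) (hAbar : HasBandwidth Abar b₁) (hP : HasBandwidth P b₀)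
    (G : ℕ → Matrix (Fin n) (Fin n) ℝ)
    (hG1 : G 1 = E * P * Abarᵀ + Abar * P * Eᵀ)
    (hGrec : ∀ i : ℕ, 1 ≤ i →
      G (i + 1) = E * (Eᵀ * G i * Abar + Abarᵀ * G i * E) * Abarᵀ
        + Abar * (Eᵀ * G i * Abar + Abarᵀ * G i * E) * Eᵀ) :
    (∀ i : ℕ, 1 ≤ i → HasBandwidth (G i) (b₀ + (4 * i - 2) * b₁)) ∧
    (∀ w : ℕ, HasBandwidth
      ((1 : Matrix (Fin n) (Fin n) ℝ) + ∑ i ∈ Finset.Icc 1 (w + 1), G i)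
      (b₀ + (4 * w + 2) * b₁)) := by
  have key : ∀ i : ℕ, 1 ≤ i → HasBandwidth (G i) (b₀ + (4 * i - 2) * b₁) := by
    intro i hi
    induction i with
    | zero => omega
    | succ i ih =>
      rcases Nat.eq_or_lt_of_le hi with h1 | h1
      · -- i + 1 = 1, so i = 0
        have hi0 : i = 0 := by omega
        subst hi0
        rw [hG1]
        have h1 : HasBandwidth (E * P * Abarᵀ) (b₁ + b₀ + b₁) :=
          (hE.mul hP).mul hAbar.transpose
        have h2 : HasBandwidth (Abar * P * Eᵀ) (b₁ + b₀ + b₁) :=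
          (hAbar.mul hP).mul hE.transpose
        exact (h1.add h2).mono (by omega)
      · have hi1 : 1 ≤ i := by omega
        have hGi := ih hi1
        rw [hGrec i hi1]
        set c := b₀ + (4 * i - 2) * b₁
        have hmid : HasBandwidth (Eᵀ * G i * Abar + Abarᵀ * G i * E) (b₁ + c + b₁) :=
          ((hE.transpose.mul hGi).mul hAbar).add ((hAbar.transpose.mul hGi).mul hE)
        have h1 : HasBandwidth (E * (Eᵀ * G i * Abar + Abarᵀ * G i * E) * Abarᵀ)
            (b₁ + (b₁ + c + b₁) + b₁) := (hE.mul hmid).mul hAbar.transpose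
        have h2 : HasBandwidth (Abar * (Eᵀ * G i * Abar + Abarᵀ * G i * E) * Eᵀ)
            (b₁ + (b₁ + c + b₁) + b₁) := (hAbar.mul hmid).mul hE.transpose
        refine (h1.add h2).mono ?_
        simp only [c]
        have : 4 * i - 2 + 4 = 4 * (i + 1) - 2 := by omega
        nlinarith [Nat.sub_le (4 * i) 2]
  refine ⟨key, fun w => ?_⟩
  have hsum : HasBandwidth (∑ i ∈ Finset.Icc 1 (w + 1), G i) (b₀ + (4 * w + 2) * b₁) := by
    intro i j hij
    rw [Matrix.sum_apply]
    refine Finset.sum_eq_zero fun k hk => ?_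
    simp only [Finset.mem_Icc] at hk
    have := (key k hk.1).mono (show b₀ + (4 * k - 2) * b₁ ≤ b₀ + (4 * w + 2) * b₁ by
      have : 4 * k - 2 ≤ 4 * w + 2 := by omega
      nlinarith)
    exact this i j hij
  exact (HasBandwidth.one _).add hsum
end
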